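/- arXiv:2502.02107 — 4 statements merged into one kernel-verified Lean document; each statement's English description precedes it below -/
import Mathlib

section
/- Let Ω be a non-empty bounded open subset of ℝ^d. Define ∂_θ Ω := {z ∈ ∂Ω : ∃ r > 0, ∀ t ∈ (0,r), z − tθ ∈ Ω} for each unit vector θ, and let ∂̃Ω := ⋃_{θ ∈ S} ∂_θ Ω, where S is the unit sphere. Then the closure of ∂̃Ω equals ∂Ω. -/
open Set

/-- The part of the boundary reachable from inside in direction `θ`. -/
def dirBoundary {d : ℕ} (Ω : Set (EuclideanSpace ℝ (Fin d)))
    (θ : EuclideanSpace ℝ (Fin d)) : Set (EuclideanSpace ℝ (Fin d)) :=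
  {z ∈ closure Ω \ Ω | ∃ r : ℝ, 0 < r ∧ ∀ t : ℝ, 0 < t → t < r → z - t • θ ∈ Ω}

theorem stmt2 {d : ℕ} (Ω : Set (EuclideanSpace ℝ (Fin d)))
    (hopen : IsOpen Ω) (hne : Ω.Nonempty) (hbd : Bornology.IsBounded Ω) :
    closure (⋃ θ ∈ Metric.sphere (0 : EuclideanSpace ℝ (Fin d)) 1, dirBoundary Ω θ)
      = closure Ω \ Ω := by
  apply Subset.antisymm
  · refine closure_minimal (iUnion₂_subset fun θ _ z hz => hz.1)
      (isClosed_closure.sdiff hopen)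
  · intro z hz
    obtain ⟨hzc, hzn⟩ := hz
    rw [Metric.mem_closure_iff]
    intro ε hε
    obtain ⟨x, hxΩ, hxd⟩ := Metric.mem_closure_iff.mp hzc ε hε
    have hxz : x ≠ z := fun h => hzn (h ▸ hxΩ)
    set v := z - x with hv
    have hvne : v ≠ 0 := sub_ne_zero.mpr (Ne.symm hxz)
    have hvnorm : 0 < ‖v‖ := norm_pos_iff.mpr hvne
    set T : Set ℝ := {t | 0 ≤ t ∧ x + t • v ∉ Ω} with hT
    have h1T : (1:ℝ) ∈ T := ⟨zero_le_one, by simpa [hv] using hzn⟩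
    have hTne : T.Nonempty := ⟨1, h1T⟩
    have hTbdd : BddBelow T := ⟨0, fun t ht => ht.1⟩
    have hTclosed : IsClosed T := by
      have h2 : IsClosed {t : ℝ | x + t • v ∉ Ω} :=
        IsClosed.preimage (continuous_const.add (continuous_id.smul continuous_const))
          hopen.isClosed_compl
      exact isClosed_Ici.inter h2
    set t₀ : ℝ := sInf T with ht₀
    have ht₀T : t₀ ∈ T := hTclosed.csInf_mem hTne hTbdd
    have ht₀nn : 0 ≤ t₀ := ht₀T.1
    have ht₀not : x + t₀ • v ∉ Ω := ht₀T.2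
    have ht₀le1 : t₀ ≤ 1 := csInf_le hTbdd h1T
    have ht₀pos : 0 < t₀ := by
      rcases ht₀nn.lt_or_eq with h | h
      · exact h
      · exact absurd (by simpa [← h] using hxΩ) ht₀not
    have hmemΩ : ∀ t : ℝ, 0 ≤ t → t < t₀ → x + t • v ∈ Ω := by
      intro t h0 hlt
      by_contra hc
      exact absurd (csInf_le hTbdd ⟨h0, hc⟩) (not_le.mpr hlt)
    set w := x + t₀ • v with hw
    have hwcl : w ∈ closure Ω := by
      have htend : Filter.Tendsto (fun t : ℝ => x + t • v)
          (nhdsWithin t₀ (Set.Iio t₀)) (nhds w) :=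
        Filter.Tendsto.mono_left
          ((continuous_const.add (continuous_id.smul continuous_const)).tendsto t₀)
          nhdsWithin_le_nhds
      refine mem_closure_of_tendsto htend ?_
      filter_upwards [Ioo_mem_nhdsLT_of_mem (⟨ht₀pos, le_refl _⟩ : t₀ ∈ Set.Ioc 0 t₀)]
        with t ht
      exact hmemΩ t ht.1.le ht.2
    set θ : EuclideanSpace ℝ (Fin d) := ‖v‖⁻¹ • v with hθ
    have hθs : θ ∈ Metric.sphere (0 : EuclideanSpace ℝ (Fin d)) 1 := by
      simp only [Metric.mem_sphere, dist_zero_right, hθ, norm_smul, Real.norm_eq_abs,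
        abs_of_nonneg (inv_nonneg.mpr hvnorm.le)]
      exact inv_mul_cancel₀ hvnorm.ne'
    refine ⟨w, ?_, ?_⟩
    · refine mem_biUnion hθs ?_
      refine ⟨⟨hwcl, ht₀not⟩, t₀ * ‖v‖, by positivity, ?_⟩
      intro t ht0 htr
      have key : w - t • θ = x + (t₀ - t * ‖v‖⁻¹) • v := by
        rw [hw, hθ, smul_smul, sub_smul]
        abel
      rw [key]
      apply hmemΩ
      · have h1 : t * ‖v‖⁻¹ < t₀ := by
          rw [← div_eq_mul_inv, div_lt_iff₀ hvnorm]
          exact htr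
        linarith
      · have : 0 < t * ‖v‖⁻¹ := by positivity
        linarith
    · have hdzw : dist z w = (1 - t₀) * ‖v‖ := by
        rw [dist_eq_norm, hw, hv]
        have h : z - (x + t₀ • (z - x)) = (1 - t₀) • (z - x) := by module
        rw [h, norm_smul, Real.norm_eq_abs, abs_of_nonneg (by linarith)]
      rw [hdzw]
      calc (1 - t₀) * ‖v‖ ≤ 1 * ‖v‖ := by nlinarith
        _ = ‖v‖ := one_mul _
        _ = dist z x := (dist_eq_norm z x).symm
        _ < ε := hxd
end

section
/- Let Ω be a non-empty bounded open subset of ℝ^d and θ a unit vector. Then the orthogonal projection of Ω onto the hyperplane H_θ orthogonal to θ through 0 equals the projection of ∂_θ Ω onto H_θ, i.e. P_θ(Ω) = P_θ(∂_θ Ω), where P_θ(x) = x − (x·θ)θ and ∂_θ Ω = {z ∈ ∂Ω : ∃ r > 0, ∀ t ∈ (0,r), z − tθ ∈ Ω}. -/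
open Set
open scoped RealInnerProductSpace

/-- Orthogonal projection onto the hyperplane orthogonal to `θ` through `0`. -/
noncomputable def hypProj {d : ℕ} (θ x : EuclideanSpace ℝ (Fin d)) :
    EuclideanSpace ℝ (Fin d) :=
  x - ⟪x, θ⟫ • θ

lemma hypProj_add_smul {d : ℕ} (θ x : EuclideanSpace ℝ (Fin d)) (hθ : ‖θ‖ = 1)
    (c : ℝ) : hypProj θ (x + c • θ) = hypProj θ x := by
  have hθθ : ⟪θ, θ⟫ = 1 := by
    rw [real_inner_self_eq_norm_sq, hθ]; norm_num
  simp only [hypProj, inner_add_left, real_inner_smul_left, hθθ, mul_one, add_smul]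
  abel

theorem stmt3 {d : ℕ} (Ω : Set (EuclideanSpace ℝ (Fin d)))
    (hopen : IsOpen Ω) (hne : Ω.Nonempty) (hbd : Bornology.IsBounded Ω)
    (θ : EuclideanSpace ℝ (Fin d)) (hθ : ‖θ‖ = 1) :
    hypProj θ '' Ω = hypProj θ '' (dirBoundary Ω θ) := by
  obtain ⟨R, hR⟩ := hbd.exists_norm_le
  apply Set.Subset.antisymm
  · rintro y ⟨x, hx, rfl⟩
    set A : Set ℝ := {t : ℝ | 0 ≤ t ∧ ∀ s : ℝ, 0 ≤ s → s ≤ t → x + s • θ ∈ Ω} with hA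
    have hA0 : (0 : ℝ) ∈ A := by
      refine ⟨le_refl _, fun s hs hs' => ?_⟩
      have : s = 0 := le_antisymm hs' hs
      simpa [this] using hx
    have hbdd : BddAbove A := by
      refine ⟨R + ‖x‖, fun t ht => ?_⟩
      have hmem := ht.2 t ht.1 le_rfl
      have h1 : ‖x + t • θ‖ ≤ R := hR _ hmem
      have h2 : ‖t • θ‖ ≤ ‖x + t • θ‖ + ‖x‖ := by
        have := norm_add_le (x + t • θ) (-x)
        simpa [add_assoc] using this
      have h3 : ‖t • θ‖ = |t| := by rw [norm_smul, hθ, mul_one]; rfl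
      have : |t| ≤ R + ‖x‖ := by
        rw [← h3]; exact h2.trans (by linarith)
      calc t ≤ |t| := le_abs_self t
        _ ≤ R + ‖x‖ := this
    set T := sSup A with hT
    have hT0 : 0 ≤ T := le_csSup hbdd hA0
    have hmemlt : ∀ s : ℝ, 0 ≤ s → s < T → x + s • θ ∈ Ω := by
      intro s hs hsT
      obtain ⟨t, htA, hst⟩ := exists_lt_of_lt_csSup ⟨0, hA0⟩ hsT
      exact htA.2 s hs hst.le
    set z := x + T • θ with hz
    have hzΩ : z ∉ Ω := by
      intro hzmem
      obtain ⟨ε, hε, hball⟩ := Metric.isOpen_iff.mp hopen z hzmem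
      have hTε : T + ε / 2 ∈ A := by
        refine ⟨by linarith, fun s hs hsle => ?_⟩
        rcases lt_or_ge s T with h | h
        · exact hmemlt s hs h
        · apply hball
          have : dist (x + s • θ) z = |s - T| := by
            rw [hz, dist_eq_norm]
            have : (x + s • θ) - (x + T • θ) = (s - T) • θ := by
              rw [sub_smul]; abel
            rw [this, norm_smul, hθ, mul_one]; rfl
          rw [Metric.mem_ball, this, abs_of_nonneg (by linarith)]
          linarith
      have := le_csSup hbdd hTε
      linarith
    have hTpos : 0 < T := by
      rcases hT0.lt_or_eq with h | h
      · exact h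
      · exfalso; apply hzΩ; rw [hz, ← h]; simpa using hx
    have hzcl : z ∈ closure Ω := by
      rw [Metric.mem_closure_iff]
      intro ε hε
      set t := min (ε / 2) (T / 2) with ht'
      have htpos : 0 < t := lt_min (by linarith) (by linarith)
      have ht2 : t ≤ T / 2 := min_le_right _ _
      refine ⟨x + (T - t) • θ, hmemlt _ (by linarith) (by linarith), ?_⟩
      have : dist z (x + (T - t) • θ) = |t| := by
        rw [hz, dist_eq_norm]
        have : (x + T • θ) - (x + (T - t) • θ) = t • θ := by
          rw [sub_smul]; abel
        rw [this, norm_smul, hθ, mul_one]; rfl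
      rw [this, abs_of_pos htpos]
      calc t ≤ ε / 2 := min_le_left _ _
        _ < ε := by linarith
    refine ⟨z, ⟨⟨hzcl, hzΩ⟩, T, hTpos, fun t h1 h2 => ?_⟩, ?_⟩
    · have : z - t • θ = x + (T - t) • θ := by
        rw [hz, sub_smul]; abel
      rw [this]
      exact hmemlt _ (by linarith) (by linarith)
    · rw [hz, hypProj_add_smul θ x hθ]
  · rintro y ⟨z, ⟨_, r, hr, hmem⟩, rfl⟩
    refine ⟨z - (r / 2) • θ, hmem _ (by linarith) (by linarith), ?_⟩
    have : z - (r / 2) • θ = z + (-(r / 2)) • θ := by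
      rw [neg_smul]; abel
    rw [this, hypProj_add_smul θ z hθ]
end

section
/- Let Ω be a non-empty bounded open subset of ℝ^d, θ a unit vector, and μ_θ(A) = λ^d({x ∈ Ω : z_θ(x) ∈ A}) the directional boundary measure. Then the set ∂Ω \ ∂_θ Ω is μ_θ-negligible, i.e. μ_θ(∂Ω \ ∂_θ Ω) = 0, where ∂_θ Ω = {z ∈ ∂Ω : ∃ r > 0, ∀ t ∈ (0,r), z − tθ ∈ Ω}. -/
open Set MeasureTheory

noncomputable def dirDelta {d : ℕ} (Ω : Set (EuclideanSpace ℝ (Fin d)))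
    (θ x : EuclideanSpace ℝ (Fin d)) : ℝ :=
  sSup {s : ℝ | 0 ≤ s ∧ ∀ t : ℝ, 0 ≤ t → t < s → x + t • θ ∈ Ω}

noncomputable def exitPoint {d : ℕ} (Ω : Set (EuclideanSpace ℝ (Fin d)))
    (θ x : EuclideanSpace ℝ (Fin d)) : EuclideanSpace ℝ (Fin d) :=
  x + dirDelta Ω θ x • θ

noncomputable def dirMeas {d : ℕ} (Ω : Set (EuclideanSpace ℝ (Fin d)))
    (θ : EuclideanSpace ℝ (Fin d)) (A : Set (EuclideanSpace ℝ (Fin d))) : ENNReal :=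
  volume {x | x ∈ Ω ∧ exitPoint Ω θ x ∈ A}

theorem stmt6 {d : ℕ} (Ω : Set (EuclideanSpace ℝ (Fin d)))
    (hopen : IsOpen Ω) (hne : Ω.Nonempty) (hbd : Bornology.IsBounded Ω)
    (θ : EuclideanSpace ℝ (Fin d)) (hθ : ‖θ‖ = 1) :
    dirMeas Ω θ ((closure Ω \ Ω) \ dirBoundary Ω θ) = 0 := by
  have key : ∀ x ∈ Ω, exitPoint Ω θ x ∈ dirBoundary Ω θ := by
    intro x hx
    obtain ⟨R, hR⟩ := hbd.exists_norm_le
    set S : Set ℝ := {s : ℝ | 0 ≤ s ∧ ∀ t : ℝ, 0 ≤ t → t < s → x + t • θ ∈ Ω} with hS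
    have hS0 : (0:ℝ) ∈ S := ⟨le_refl 0, fun t ht ht' => absurd (ht.trans_lt ht') (lt_irrefl 0)⟩
    have hub : ∀ s ∈ S, s ≤ R + ‖x‖ + 1 := by
      intro s hs
      by_contra h
      push_neg at h
      have hxR : ‖x‖ ≤ R := hR x hx
      set t : ℝ := R + ‖x‖ + 1 with ht
      have ht0 : 0 ≤ t := by linarith [norm_nonneg x]
      have hts : t < s := h
      have hmem := hs.2 t ht0 hts
      have h1 : ‖x + t • θ‖ ≤ R := hR _ hmem
      have h2 : t = ‖t • θ‖ := by
        rw [norm_smul, hθ, mul_one, Real.norm_eq_abs, abs_of_nonneg ht0]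
      have h3 : ‖t • θ‖ ≤ ‖x + t • θ‖ + ‖x‖ := by
        have h4 : ‖(x + t • θ) - x‖ ≤ ‖x + t • θ‖ + ‖x‖ := norm_sub_le _ _
        have h5 : (x + t • θ) - x = t • θ := by abel
        rwa [h5] at h4
      nlinarith
    have hbdd : BddAbove S := ⟨R + ‖x‖ + 1, hub⟩
    set δ : ℝ := dirDelta Ω θ x with hδ
    have hδS : δ = sSup S := rfl
    have hmem : ∀ t : ℝ, 0 ≤ t → t < δ → x + t • θ ∈ Ω := by
      intro t ht htδ
      obtain ⟨s, hsS, hts⟩ := exists_lt_of_lt_csSup ⟨0, hS0⟩ htδ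
      exact hsS.2 t ht hts
    obtain ⟨ε, hε, hball⟩ := Metric.isOpen_iff.mp hopen x hx
    have hεS : ε ∈ S := by
      refine ⟨hε.le, fun t ht ht' => hball ?_⟩
      rw [Metric.mem_ball, dist_eq_norm]
      have : x + t • θ - x = t • θ := by abel
      rw [this, norm_smul, hθ, mul_one, Real.norm_eq_abs, abs_of_nonneg ht]
      exact ht'
    have hδpos : 0 < δ := lt_of_lt_of_le hε (le_csSup hbdd hεS)
    set z : EuclideanSpace ℝ (Fin d) := exitPoint Ω θ x with hz
    have hzdef : z = x + δ • θ := rfl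
    have hznot : z ∉ Ω := by
      intro hzΩ
      obtain ⟨ε', hε', hball'⟩ := Metric.isOpen_iff.mp hopen z hzΩ
      have hδε'S : δ + ε' ∈ S := by
        refine ⟨by linarith, fun t ht ht' => ?_⟩
        rcases lt_or_ge t δ with h | h
        · exact hmem t ht h
        · refine hball' ?_
          rw [Metric.mem_ball, dist_eq_norm, hzdef]
          have : x + t • θ - (x + δ • θ) = (t - δ) • θ := by
            rw [sub_smul]; abel
          rw [this, norm_smul, hθ, mul_one, Real.norm_eq_abs, abs_of_nonneg (by linarith)]
          linarith
      have := le_csSup hbdd hδε'S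
      rw [← hδS] at this
      linarith
    have hzcl : z ∈ closure Ω := by
      rw [Metric.mem_closure_iff]
      intro ε' hε'
      rcases le_or_gt δ (ε'/2) with h | h
      · refine ⟨x, hx, ?_⟩
        rw [dist_eq_norm, hzdef]
        have : x + δ • θ - x = δ • θ := by abel
        rw [this, norm_smul, hθ, mul_one, Real.norm_eq_abs, abs_of_nonneg hδpos.le]
        linarith
      · refine ⟨x + (δ - ε'/2) • θ, hmem _ (by linarith) (by linarith), ?_⟩
        rw [dist_eq_norm, hzdef]
        have : x + δ • θ - (x + (δ - ε'/2) • θ) = (ε'/2) • θ := by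
          rw [sub_smul]; abel
        rw [this, norm_smul, hθ, mul_one, Real.norm_eq_abs, abs_of_nonneg (by linarith)]
        linarith
    refine ⟨⟨hzcl, hznot⟩, δ, hδpos, fun t ht htδ => ?_⟩
    have : z - t • θ = x + (δ - t) • θ := by
      rw [hzdef, sub_smul]; abel
    rw [this]
    exact hmem (δ - t) (by linarith) (by linarith)
  have hempty : {x | x ∈ Ω ∧ exitPoint Ω θ x ∈ ((closure Ω \ Ω) \ dirBoundary Ω θ)} = ∅ := by
    ext x
    simp only [mem_setOf_eq, mem_empty_iff_false, iff_false]
    rintro ⟨hxΩ, _, hnd⟩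
    exact hnd (key x hxΩ)
  rw [dirMeas, hempty, measure_empty]
end

section
/- Let Ω be a non-empty bounded open subset of ℝ^d, θ a unit vector, and A a non-empty Borel subset of ∂_θ Ω. Then μ_θ(A) > 0 if and only if λ^{d−1}(P_θ(A)) > 0, where P_θ is the orthogonal projection onto the hyperplane orthogonal to θ, λ^{d−1} is the (d−1)-dimensional Lebesgue measure on that hyperplane, and μ_θ is the directional boundary measure. -/
open Set MeasureTheory
open scoped RealInnerProductSpace

/-!
Rotate `θ` onto the first coordinate vector `e₀` and write `ℝ^(n+1) = ℝ^n × ℝ`. The exit time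
`δ_θ` is lower semicontinuous, so the exit set `E = {x ∈ Ω | z_θ(x) ∈ A}` is Borel. The vertical
line over `y ∈ ℝ^n` meets `E` only if `y` is the projection of a point of `A` (the exit point lies
on the same line), and if `y` is the projection of `z ∈ A ⊆ ∂_θ Ω` it meets `E` in a whole interval
below `z`, all of whose points exit at `z`. By Tonelli, `E` is null iff almost every slice is,
i.e. iff the projection of `A` is `λ^n`-null. On the hyperplane `θ^⊥` the coordinate projection
is bi-Lipschitz, so it preserves `μH[n]`-null sets, and on `ℝ^n` the measure `μH[n]` is `λ^n`.
-/

open Bornology Filter Topology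

section ExitTime

variable {d : ℕ} {Ω : Set (EuclideanSpace ℝ (Fin d))} {θ : EuclideanSpace ℝ (Fin d)}

lemma le_dirDelta (hbd : IsBounded Ω) (hθ : ‖θ‖ = 1) {x : EuclideanSpace ℝ (Fin d)} {s : ℝ}
    (hs : 0 ≤ s) (hray : ∀ t : ℝ, 0 ≤ t → t < s → x + t • θ ∈ Ω) : s ≤ dirDelta Ω θ x := by
  refine le_csSup ?_ ⟨hs, hray⟩
  obtain ⟨R, hR⟩ := hbd.subset_ball 0
  set c := max 0 (R + ‖x‖)
  refine ⟨c, fun s' ⟨_, hs'⟩ => not_lt.1 fun hcs' => ?_⟩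
  have hc : ‖x + c • θ‖ < R := by simpa using hR (hs' c (le_max_left _ _) hcs')
  have : c ≤ ‖x + c • θ‖ + ‖x‖ :=
    calc c = ‖(x + c • θ) - x‖ := by
          rw [add_sub_cancel_left, norm_smul, hθ, mul_one, Real.norm_of_nonneg (le_max_left _ _)]
      _ ≤ ‖x + c • θ‖ + ‖x‖ := norm_sub_le _ _
  linarith [le_max_right 0 (R + ‖x‖)]

lemma dirDelta_sub_smul {z : EuclideanSpace ℝ (Fin d)} {r t : ℝ} (hz : z ∉ Ω)
    (hray : ∀ u : ℝ, 0 < u → u < r → z - u • θ ∈ Ω) (ht : 0 < t) (htr : t < r) :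
    dirDelta Ω θ (z - t • θ) = t := by
  refine IsGreatest.csSup_eq ⟨⟨ht.le, fun u hu hut => ?_⟩, fun s ⟨_, hs⟩ => not_lt.1 fun hts => ?_⟩
  · rw [show z - t • θ + u • θ = z - (t - u) • θ by module]
    exact hray _ (by linarith) (by linarith)
  · exact hz (by simpa using hs t ht.le hts)

lemma exitPoint_sub_smul {z : EuclideanSpace ℝ (Fin d)} {r t : ℝ} (hz : z ∉ Ω)
    (hray : ∀ u : ℝ, 0 < u → u < r → z - u • θ ∈ Ω) (ht : 0 < t) (htr : t < r) :
    exitPoint Ω θ (z - t • θ) = z := by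
  rw [exitPoint, dirDelta_sub_smul hz hray ht htr, sub_add_cancel]

lemma lowerSemicontinuous_dirDelta (hopen : IsOpen Ω) (hbd : IsBounded Ω) (hθ : ‖θ‖ = 1) :
    LowerSemicontinuous (dirDelta Ω θ) := by
  intro x a ha
  rcases lt_or_ge a 0 with ha0 | ha0
  · exact .of_forall fun _ => ha0.trans_le (Real.sSup_nonneg fun _ hs => hs.1)
  obtain ⟨s, ⟨-, hs⟩, has⟩ :
      ∃ s ∈ {s : ℝ | 0 ≤ s ∧ ∀ t : ℝ, 0 ≤ t → t < s → x + t • θ ∈ Ω}, a < s :=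
    exists_lt_of_lt_csSup ⟨0, le_rfl, fun t ht ht0 => (ht.not_gt ht0).elim⟩ ha
  obtain ⟨b, hab, hbs⟩ := exists_between has
  -- the segment `x + [0, b] • θ` is compact, so it stays in `Ω` under small perturbations of `x`
  have hseg : ∀ᶠ x' in 𝓝 x, ∀ t ∈ Icc 0 b, x' + t • θ ∈ Ω :=
    isCompact_Icc.eventually_forall_of_forall_eventually fun t ht =>
      (continuous_fst.add (continuous_snd.smul continuous_const)).continuousAt.eventually_mem
        (hopen.mem_nhds (hs t ht.1 (by linarith [ht.2])))
  filter_upwards [hseg] with x' hx'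
  exact hab.trans_le (le_dirDelta hbd hθ (ha0.trans hab.le) fun t ht htb => hx' t ⟨ht, htb.le⟩)

lemma measurable_exitPoint (hopen : IsOpen Ω) (hbd : IsBounded Ω) (hθ : ‖θ‖ = 1) :
    Measurable (exitPoint Ω θ) :=
  measurable_id.add ((lowerSemicontinuous_dirDelta hopen hbd hθ).measurable.smul_const θ)

def exitSet (Ω : Set (EuclideanSpace ℝ (Fin d))) (θ : EuclideanSpace ℝ (Fin d))
    (A : Set (EuclideanSpace ℝ (Fin d))) : Set (EuclideanSpace ℝ (Fin d)) :=
  {x | x ∈ Ω ∧ exitPoint Ω θ x ∈ A}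

lemma dirMeas_eq_volume_exitSet (A : Set (EuclideanSpace ℝ (Fin d))) :
    dirMeas Ω θ A = volume (exitSet Ω θ A) :=
  rfl

lemma measurableSet_exitSet (hopen : IsOpen Ω) (hbd : IsBounded Ω) (hθ : ‖θ‖ = 1)
    {A : Set (EuclideanSpace ℝ (Fin d))} (hA : MeasurableSet A) :
    MeasurableSet (exitSet Ω θ A) :=
  hopen.measurableSet.inter (measurable_exitPoint hopen hbd hθ hA)

end ExitTime

section Isometry

variable {d : ℕ} (e : EuclideanSpace ℝ (Fin d) ≃ₗᵢ[ℝ] EuclideanSpace ℝ (Fin d))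
  (Ω : Set (EuclideanSpace ℝ (Fin d))) (θ : EuclideanSpace ℝ (Fin d))

lemma dirDelta_image (x : EuclideanSpace ℝ (Fin d)) :
    dirDelta (e '' Ω) (e θ) (e x) = dirDelta Ω θ x := by
  simp only [dirDelta, ← LinearIsometryEquiv.map_smul, ← map_add, e.injective.mem_set_image]

lemma exitPoint_image (x : EuclideanSpace ℝ (Fin d)) :
    exitPoint (e '' Ω) (e θ) (e x) = e (exitPoint Ω θ x) := by
  rw [exitPoint, exitPoint, map_add, LinearIsometryEquiv.map_smul, dirDelta_image]

lemma dirMeas_image (A : Set (EuclideanSpace ℝ (Fin d))) :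
    dirMeas (e '' Ω) (e θ) (e '' A) = dirMeas Ω θ A := by
  rw [dirMeas, dirMeas, ← e.measurePreserving.measure_preimage_equiv (f := e.toMeasurableEquiv)]
  congr 1
  ext x
  simp [exitPoint_image]

lemma image_dirBoundary_subset : e '' dirBoundary Ω θ ⊆ dirBoundary (e '' Ω) (e θ) := by
  rintro _ ⟨z, ⟨⟨hzc, hzΩ⟩, r, hr, hray⟩, rfl⟩
  refine ⟨⟨mem_closure_image e.continuous.continuousAt hzc,
    fun h => hzΩ (e.injective.mem_set_image.1 h)⟩, r, hr, fun t ht htr => ?_⟩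
  rw [← LinearIsometryEquiv.map_smul, ← map_sub]
  exact mem_image_of_mem _ (hray t ht htr)

lemma hypProj_image (x : EuclideanSpace ℝ (Fin d)) : hypProj (e θ) (e x) = e (hypProj θ x) := by
  rw [hypProj, hypProj, map_sub, LinearIsometryEquiv.map_smul, e.inner_map_map]

end Isometry

open scoped NNReal in
lemma LipschitzWith.hausdorffMeasure_image_eq_zero_iff {X Y : Type*} [EMetricSpace X]
    [MeasurableSpace X] [BorelSpace X] [EMetricSpace Y] [MeasurableSpace Y] [BorelSpace Y]
    {f : X → Y} {g : Y → X} {K L : ℝ≥0} (hf : LipschitzWith K f) (hg : LipschitzWith L g)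
    {s : Set X} (hgf : ∀ x ∈ s, g (f x) = x) {r : ℝ} (hr : 0 ≤ r) :
    μH[r] (f '' s) = 0 ↔ μH[r] s = 0 := by
  refine ⟨fun h => ?_, fun h => ?_⟩
  · have hs : g '' (f '' s) = s := by rw [image_image, image_congr hgf, image_id']
    have := hg.hausdorffMeasure_image_le hr (f '' s)
    rwa [hs, h, mul_zero, nonpos_iff_eq_zero] at this
  · have := hf.hausdorffMeasure_image_le hr s
    rwa [h, mul_zero, nonpos_iff_eq_zero] at this

section FirstCoordinate

variable {n : ℕ} {Ω A : Set (EuclideanSpace ℝ (Fin (n + 1)))}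

local notation "e₀" => EuclideanSpace.single (0 : Fin (n + 1)) (1 : ℝ)

/-- The first coordinate goes to the second factor, so that the slices in
`Measure.measure_prod_null` are the lines parallel to `e₀`. -/
noncomputable def coordSplit (n : ℕ) : EuclideanSpace ℝ (Fin (n + 1)) ≃L[ℝ] (Fin n → ℝ) × ℝ :=
  ((EuclideanSpace.equiv (Fin (n + 1)) ℝ).trans (Fin.consEquivL ℝ fun _ => ℝ).symm).trans
    (ContinuousLinearEquiv.prodComm ℝ ℝ (Fin n → ℝ))

@[simp]
lemma coordSplit_apply (z : EuclideanSpace ℝ (Fin (n + 1))) :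
    coordSplit n z = (fun j => z j.succ, z 0) :=
  rfl

lemma measurePreserving_coordSplit : MeasurePreserving (coordSplit n) := by
  have : ⇑(coordSplit n) = Prod.swap ∘ MeasurableEquiv.piFinSuccAbove (fun _ => ℝ) 0 ∘
      (MeasurableEquiv.toLp 2 (Fin (n + 1) → ℝ)).symm := by
    ext z <;> simp [MeasurableEquiv.piFinSuccAbove, Fin.tail]
  rw [this]
  exact Measure.measurePreserving_swap.comp ((volume_preserving_piFinSuccAbove _ 0).comp
    (EuclideanSpace.volume_preserving_symm_measurableEquiv_toLp _))

lemma coordSplit_add_smul (z : EuclideanSpace ℝ (Fin (n + 1))) (s : ℝ) :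
    coordSplit n (z + s • e₀) = ((coordSplit n z).1, (coordSplit n z).2 + s) := by
  simp [Fin.succ_ne_zero]

lemma coordSplit_hypProj (z : EuclideanSpace ℝ (Fin (n + 1))) :
    coordSplit n (hypProj e₀ z) = ((coordSplit n z).1, 0) := by
  simp [hypProj, EuclideanSpace.inner_single_right, Fin.succ_ne_zero]

lemma volume_slice_ne_zero_iff (hA : A ⊆ dirBoundary Ω e₀) (y : Fin n → ℝ) :
    volume (Prod.mk y ⁻¹' (coordSplit n '' exitSet Ω e₀ A)) ≠ 0 ↔
      y ∈ (Prod.fst ∘ coordSplit n) '' A := by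
  constructor
  · intro hy
    obtain ⟨t, x, ⟨-, hxA⟩, hxy⟩ := nonempty_of_measure_ne_zero hy
    refine ⟨exitPoint Ω e₀ x, hxA, ?_⟩
    simp only [Function.comp_apply, exitPoint, coordSplit_add_smul, hxy]
  · rintro ⟨z, hzA, rfl⟩
    obtain ⟨⟨-, hzΩ⟩, r, hr, hray⟩ := hA hzA
    have hIoo : Ioo (z 0 - r) (z 0) ⊆
        Prod.mk ((coordSplit n z).1) ⁻¹' (coordSplit n '' exitSet Ω e₀ A) := by
      intro t ht
      have hu : 0 < z 0 - t ∧ z 0 - t < r := ⟨by linarith [ht.2], by linarith [ht.1]⟩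
      refine ⟨z - (z 0 - t) • e₀, ⟨hray _ hu.1 hu.2, ?_⟩, ?_⟩
      · rwa [exitPoint_sub_smul hzΩ hray hu.1 hu.2]
      · rw [sub_eq_add_neg, ← neg_smul, coordSplit_add_smul]
        simp
    refine (lt_of_lt_of_le ?_ (measure_mono hIoo)).ne'
    simp [hr]

lemma dirMeas_single_eq_zero_iff (hopen : IsOpen Ω) (hbd : IsBounded Ω) (hAm : MeasurableSet A)
    (hA : A ⊆ dirBoundary Ω e₀) :
    dirMeas Ω e₀ A = 0 ↔ volume ((Prod.fst ∘ coordSplit n) '' A) = 0 := by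
  have hE : MeasurableSet (coordSplit n '' exitSet Ω e₀ A) := by
    rw [ContinuousLinearEquiv.image_eq_preimage_symm]
    exact (coordSplit n).symm.continuous.measurable
      (measurableSet_exitSet hopen hbd (by simp) hAm)
  have hvol : dirMeas Ω e₀ A = volume (coordSplit n '' exitSet Ω e₀ A) := by
    rw [← measurePreserving_coordSplit.measure_preimage hE.nullMeasurableSet,
      (coordSplit n).injective.preimage_image, dirMeas_eq_volume_exitSet]
  rw [hvol, Measure.volume_eq_prod, Measure.measure_prod_null hE, EventuallyEq, ae_iff]
  simp only [Pi.zero_apply, volume_slice_ne_zero_iff hA, ofPred_mem_eq]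

lemma hausdorffMeasure_image_hypProj_eq_zero_iff :
    μH[n] (hypProj e₀ '' A) = 0 ↔ volume ((Prod.fst ∘ coordSplit n) '' A) = 0 := by
  have hproj : ∀ z, (Prod.fst ∘ coordSplit n) (hypProj e₀ z) = (coordSplit n z).1 := fun z => by
    simp only [Function.comp_apply, coordSplit_hypProj]
  have hlift : ∀ z ∈ hypProj e₀ '' A,
      (coordSplit n).symm ((Prod.fst ∘ coordSplit n) z, 0) = z := by
    rintro _ ⟨z, -, rfl⟩
    rw [hproj, ← coordSplit_hypProj, ContinuousLinearEquiv.symm_apply_apply]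
  rw [← LipschitzWith.hausdorffMeasure_image_eq_zero_iff
    (LipschitzWith.prod_fst.comp (coordSplit n).lipschitz)
    ((coordSplit n).symm.lipschitz.comp (LipschitzWith.prodMk_right 0)) hlift n.cast_nonneg,
    image_image, image_congr fun z _ => hproj z, ← hausdorffMeasure_pi_real, Fintype.card_fin]
  rfl

end FirstCoordinate

theorem stmt7_general {d : ℕ} (Ω : Set (EuclideanSpace ℝ (Fin d)))
    (hopen : IsOpen Ω) (hbd : Bornology.IsBounded Ω)
    (θ : EuclideanSpace ℝ (Fin d)) (hθ : ‖θ‖ = 1)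
    (A : Set (EuclideanSpace ℝ (Fin d)))
    (hAmeas : MeasurableSet A) (hA : A ⊆ dirBoundary Ω θ) :
    0 < dirMeas Ω θ A ↔
      0 < Measure.hausdorffMeasure ((d : ℝ) - 1) (hypProj θ '' A) := by
  obtain _ | n := d
  · exact absurd hθ (by simp [Subsingleton.elim θ 0])
  set e₀ := EuclideanSpace.single (0 : Fin (n + 1)) (1 : ℝ)
  set e := Submodule.reflection (ℝ ∙ (θ - e₀))ᗮ
  have he : e θ = e₀ := Submodule.reflection_sub (by simp [hθ, e₀])
  have hA' : e '' A ⊆ dirBoundary (e '' Ω) e₀ :=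
    he ▸ (image_mono hA).trans (image_dirBoundary_subset e Ω θ)
  have hopen' : IsOpen (e '' Ω) := e.toHomeomorph.isOpenMap _ hopen
  have hAmeas' : MeasurableSet (e '' A) := e.toMeasurableEquiv.measurableSet_image.2 hAmeas
  have hμ : dirMeas Ω θ A = dirMeas (e '' Ω) e₀ (e '' A) := by rw [← he, dirMeas_image]
  have hH : hypProj θ '' A = e.symm '' (hypProj e₀ '' (e '' A)) := by
    simp only [image_image, ← he, hypProj_image, LinearIsometryEquiv.symm_apply_apply]
  rw [hμ, hH, e.symm.isometry.hausdorffMeasure_image (Or.inr e.symm.surjective),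
    Nat.cast_succ, add_sub_cancel_right, pos_iff_ne_zero, pos_iff_ne_zero, ne_eq, ne_eq,
    not_iff_not, dirMeas_single_eq_zero_iff hopen' (e.lipschitz.isBounded_image hbd) hAmeas' hA',
    hausdorffMeasure_image_hypProj_eq_zero_iff]

theorem stmt7 {d : ℕ} (Ω : Set (EuclideanSpace ℝ (Fin d)))
    (hopen : IsOpen Ω) (hne : Ω.Nonempty) (hbd : Bornology.IsBounded Ω)
    (θ : EuclideanSpace ℝ (Fin d)) (hθ : ‖θ‖ = 1)
    (A : Set (EuclideanSpace ℝ (Fin d))) (hAne : A.Nonempty)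
    (hAmeas : MeasurableSet A) (hA : A ⊆ dirBoundary Ω θ) :
    0 < dirMeas Ω θ A ↔
      0 < Measure.hausdorffMeasure ((d : ℝ) - 1) (hypProj θ '' A) :=
  stmt7_general Ω hopen hbd θ hθ A hAmeas hA
end
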